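/- The map Φ̂^C: P^C_{2n} → Q_n^C is monotone: if π ≤ λ in dominance order on P^C_{2n}, then Φ̂^C(π) ≤ Φ̂^C(λ) in the interleaved dominance order on bipartitions. -/

import Mathlib

open Finset

/-- Partial sum of the first `k` terms of a sequence of naturals. -/
def psum (π : ℕ → ℕ) (k : ℕ) : ℕ := ∑ i ∈ Finset.range k, π i

/-- A composition of `n`: almost all terms zero, summing to `n`. -/
def IsComposition (n : ℕ) (π : ℕ → ℕ) : Prop :=
  ∃ N, (∀ i, N ≤ i → π i = 0) ∧ psum π N = n

/-- Dominance order: `l` dominates `π`. -/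
def Dominates (l π : ℕ → ℕ) : Prop := ∀ k, psum π k ≤ psum l k

/-- A partition: weakly decreasing sequence. -/
def IsPartition (π : ℕ → ℕ) : Prop := ∀ i, π (i + 1) ≤ π i

/-- A quasi-partition: `π i ≥ π (i+2)` for all `i`. -/
def IsQuasiPartition (π : ℕ → ℕ) : Prop := ∀ i, π (i + 2) ≤ π i

/-- Interleaving of two sequences: `(ρ₁, σ₁, ρ₂, σ₂, …)` (0-indexed). -/
def interleave (ρ σ : ℕ → ℕ) (i : ℕ) : ℕ :=
  if i % 2 = 0 then ρ (i / 2) else σ (i / 2)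

/-- A bipartition of `n`: a pair of partitions whose interleaving sums to `n`. -/
def IsBipartition (n : ℕ) (ρ σ : ℕ → ℕ) : Prop :=
  IsPartition ρ ∧ IsPartition σ ∧ IsComposition n (interleave ρ σ)

/-- Interleaved dominance order on bipartitions: `(ρ;σ) ≤ (μ;ν)`. -/
def BiLE (ρ σ μ ν : ℕ → ℕ) : Prop :=
  Dominates (interleave μ ν) (interleave ρ σ)

/-- The map `Φ^C` on sequences: replace a consecutive pair `2s < 2t`
by `s+t, s+t` (pointwise description; replacements never overlap for
quasi-partitions). -/
def phiC (π : ℕ → ℕ) : ℕ → ℕ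
  | 0 => if π 0 < π 1 then (π 0 + π 1) / 2 else π 0
  | (j + 1) =>
      if π (j + 1) < π (j + 2) then (π (j + 1) + π (j + 2)) / 2
      else if π j < π (j + 1) then (π j + π (j + 1)) / 2
      else π (j + 1)

/-- `Φ^C` of a bipartition: apply `phiC` to the doubled interleaving. -/
def PhiC (ρ σ : ℕ → ℕ) : ℕ → ℕ := phiC (fun i => 2 * interleave ρ σ i)

/-- Membership in `P^C_{2n}`: partition of `2n` with every odd part of even
multiplicity. -/
def IsPC (n : ℕ) (l : ℕ → ℕ) : Prop :=
  IsPartition l ∧ IsComposition (2 * n) l ∧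
    ∀ a : ℕ, Odd a → Even ({i | l i = a}.ncard)

/-- C-distinguished: `μ i ≥ ν i - 1` and `ν i ≥ μ (i+1) - 1`. -/
def QC (μ ν : ℕ → ℕ) : Prop :=
  ∀ i, ν i ≤ μ i + 1 ∧ μ (i + 1) ≤ ν i + 1

/-- B-distinguished: `μ i ≥ ν i - 2` and `ν i ≥ μ (i+1)`. -/
def QB (μ ν : ℕ → ℕ) : Prop :=
  ∀ i, ν i ≤ μ i + 2 ∧ μ (i + 1) ≤ ν i

/-- Special: `μ i ≥ ν i - 1` and `ν i ≥ μ (i+1)`. -/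
def QS (μ ν : ℕ → ℕ) : Prop :=
  ∀ i, ν i ≤ μ i + 1 ∧ μ (i + 1) ≤ ν i

/-- The condition defining `Q_n^{B,2}`: `μ i ≥ ν i - 2`. -/
def QB2 (μ ν : ℕ → ℕ) : Prop := ∀ i, ν i ≤ μ i + 2

/-- For an antitone sequence, the starting index of the run of equal values
containing index `i`. -/
noncomputable def runStart (l : ℕ → ℕ) (i : ℕ) : ℕ := {j | l i < l j}.ncard

/-- The map `Φ̂^C`, pointwise: halve even parts; replace an (even-length)
maximal run of an odd part `2k+1` with `k, k+1, k, k+1, …`. -/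
noncomputable def hphiC (l : ℕ → ℕ) (i : ℕ) : ℕ :=
  if Even (l i) then l i / 2
  else if Even (i - runStart l i) then l i / 2 else l i / 2 + 1

/-- Partial sums of an integer sequence. -/
def zsum (π : ℕ → ℤ) (k : ℕ) : ℤ := ∑ i ∈ Finset.range k, π i

/-- Dominance order on integer sequences. -/
def ZDominates (l π : ℕ → ℤ) : Prop := ∀ k, zsum π k ≤ zsum l k

/-- The interleaved integer sequence `(2ρ₁+1, 2σ₁−1, 2ρ₂+1, 2σ₂−1, …)`. -/
def interB (ρ σ : ℕ → ℕ) (i : ℕ) : ℤ :=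
  if i % 2 = 0 then 2 * (ρ (i / 2) : ℤ) + 1 else 2 * (σ (i / 2) : ℤ) - 1

/-- The map `Φ^B` on integer sequences: replace a consecutive pair `s < t`
by `(s+t)/2, (s+t)/2` (pointwise description). -/
def phiB (π : ℕ → ℤ) : ℕ → ℤ
  | 0 => if π 0 < π 1 then (π 0 + π 1) / 2 else π 0
  | (j + 1) =>
      if π (j + 1) < π (j + 2) then (π (j + 1) + π (j + 2)) / 2
      else if π j < π (j + 1) then (π j + π (j + 1)) / 2
      else π (j + 1)

/-- `Φ^B` of a bipartition. -/
def PhiB (ρ σ : ℕ → ℕ) : ℕ → ℤ := phiB (interB ρ σ)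

/-- Membership in `P^B_{2n+1}` for an integer sequence: nonnegative, weakly
decreasing, summing to `2n+1`, with every (positive) even part of even
multiplicity. -/
def IsPB (n : ℕ) (l : ℕ → ℤ) : Prop :=
  (∀ i, 0 ≤ l i) ∧ (∀ i, l (i + 1) ≤ l i) ∧
  (∃ N, (∀ i, N ≤ i → l i = 0) ∧ zsum l N = 2 * n + 1) ∧
  ∀ a : ℤ, 0 < a → Even a → Even ({i | l i = a}.ncard)

/-- Membership in `P^B_{2n+1}` for a natural-number partition. -/
def IsPBN (n : ℕ) (l : ℕ → ℕ) : Prop :=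
  IsPartition l ∧ IsComposition (2 * n + 1) l ∧
    ∀ a : ℕ, 0 < a → Even a → Even ({i | l i = a}.ncard)

/-- The map `Φ̂^B`, pointwise (0-indexed, so the paper's index `i` is `j+1`):
an odd part `λ_i` becomes `(λ_i + (−1)^i)/2`; a maximal run of an even part
`2k` starting at (0-indexed) position `s` becomes `k, k, …` if `s` is odd
(paper's `i` even) and `k−1, k+1, k−1, k+1, …` if `s` is even (paper's `i`
odd). -/
noncomputable def hphiB (l : ℕ → ℕ) (j : ℕ) : ℕ :=
  if Odd (l j) then (if Even j then (l j - 1) / 2 else (l j + 1) / 2)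
  else
    if Odd (runStart l j) then l j / 2
    else if Even (j - runStart l j) then l j / 2 - 1 else l j / 2 + 1

/-- First component of the special closure `(ρ;σ)°`. -/
def scRho (ρ σ : ℕ → ℕ) : ℕ → ℕ
  | 0 => if ρ 0 + 1 < σ 0 then (ρ 0 + σ 0) / 2 else ρ 0
  | (i + 1) =>
      if ρ (i + 1) + 1 < σ (i + 1) then (ρ (i + 1) + σ (i + 1)) / 2
      else if σ i < ρ (i + 1) then (σ i + ρ (i + 1)) / 2
      else ρ (i + 1)

/-- Second component of the special closure `(ρ;σ)°`. -/
def scSigma (ρ σ : ℕ → ℕ) (i : ℕ) : ℕ :=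
  if ρ i + 1 < σ i then (ρ i + σ i + 1) / 2
  else if σ i < ρ (i + 1) then (σ i + ρ (i + 1) + 1) / 2
  else σ i

/-- First component of the closure `(ρ;σ)~` into `Q_n^{B,2}`. -/
def tRho (ρ σ : ℕ → ℕ) (i : ℕ) : ℕ :=
  if ρ i + 2 < σ i then (ρ i + σ i + 1) / 2 - 1 else ρ i

/-- Second component of the closure `(ρ;σ)~` into `Q_n^{B,2}`. -/
def tSigma (ρ σ : ℕ → ℕ) (i : ℕ) : ℕ :=
  if ρ i + 2 < σ i then (ρ i + σ i) / 2 + 1 else σ i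

/-- First component of the closure `(ρ;σ)^B` into `Q_n^B`. -/
def bRho (ρ σ : ℕ → ℕ) : ℕ → ℕ
  | 0 => if ρ 0 + 2 < σ 0 then (ρ 0 + σ 0 + 1) / 2 - 1 else ρ 0
  | (i + 1) =>
      if ρ (i + 1) + 2 < σ (i + 1) then (ρ (i + 1) + σ (i + 1) + 1) / 2 - 1
      else if σ i < ρ (i + 1) then (σ i + ρ (i + 1)) / 2
      else ρ (i + 1)

/-- Second component of the closure `(ρ;σ)^B` into `Q_n^B`. -/
def bSigma (ρ σ : ℕ → ℕ) (i : ℕ) : ℕ :=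
  if ρ i + 2 < σ i then (ρ i + σ i) / 2 + 1
  else if σ i < ρ (i + 1) then (σ i + ρ (i + 1) + 1) / 2
  else σ i

/-- First component of the closure `(ρ;σ)^C` into `Q_n^C`. -/
def cRho (ρ σ : ℕ → ℕ) : ℕ → ℕ
  | 0 => if ρ 0 + 1 < σ 0 then (ρ 0 + σ 0) / 2 else ρ 0
  | (i + 1) =>
      if ρ (i + 1) + 1 < σ (i + 1) then (ρ (i + 1) + σ (i + 1)) / 2
      else if σ i + 1 < ρ (i + 1) then (σ i + ρ (i + 1) + 1) / 2
      else ρ (i + 1)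

/-- Second component of the closure `(ρ;σ)^C` into `Q_n^C`. -/
def cSigma (ρ σ : ℕ → ℕ) (i : ℕ) : ℕ :=
  if ρ i + 1 < σ i then (ρ i + σ i + 1) / 2
  else if σ i + 1 < ρ (i + 1) then (σ i + ρ (i + 1)) / 2
  else σ i

/-!
For `λ ∈ P^C_{2n}` the first `k` parts of `Φ̂^C(λ)` sum to `⌊(λ_1 + ⋯ + λ_k) / 2⌋`. Indeed,
since runs of odd parts have even length, the partial sum `λ_1 + ⋯ + λ_k` is odd exactly when
it stops at an odd offset inside a run of an odd part `2m+1`, which is exactly where the pattern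
`m, m+1, m, m+1, …` has handed out one more `m` than `m+1`. As `⌊x/2⌋` is monotone, dominance
`π ≤ λ` passes to `Φ̂^C(π) ≤ Φ̂^C(λ)`.
-/

lemma psum_succ (π : ℕ → ℕ) (k : ℕ) : psum π (k + 1) = psum π k + π k :=
  sum_range_succ π k

section runStart

variable {l : ℕ → ℕ}

lemma runStart_eq_sInf (hA : Antitone l) (i : ℕ) :
    runStart l i = sInf {j | l j ≤ l i} := by
  have hmem : l (sInf {j | l j ≤ l i}) ≤ l i := Nat.sInf_mem (s := {j | l j ≤ l i}) ⟨i, by simp⟩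
  have hset : {j | l i < l j} = Set.Iio (sInf {j | l j ≤ l i}) := by
    ext j
    simp only [Set.mem_ofPred_eq, Set.mem_Iio]
    refine ⟨fun hj => not_le.mp fun h => ?_, fun hj => ?_⟩
    · have := hA h
      omega
    · have : j ∉ {j | l j ≤ l i} := Nat.notMem_of_lt_sInf hj
      simpa using this
  rw [runStart, hset, ← coe_range, Set.ncard_coe_finset, card_range]

lemma runStart_le (hA : Antitone l) (i : ℕ) : runStart l i ≤ i := by
  rw [runStart_eq_sInf hA]
  exact Nat.sInf_le (by simp)

lemma apply_eq_of_runStart_le (hA : Antitone l) {i j : ℕ}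
    (hsj : runStart l i ≤ j) (hji : j ≤ i) : l j = l i := by
  rw [runStart_eq_sInf hA] at hsj
  have hmem : l (sInf {j | l j ≤ l i}) ≤ l i := Nat.sInf_mem (s := {j | l j ≤ l i}) ⟨i, by simp⟩
  have := hA hsj
  have := hA hji
  omega

lemma apply_lt_of_lt_runStart (hA : Antitone l) {i j : ℕ} (h : j < runStart l i) :
    l i < l j := by
  rw [runStart_eq_sInf hA] at h
  have : j ∉ {j | l j ≤ l i} := Nat.notMem_of_lt_sInf h
  simpa using this

lemma runStart_succ_of_eq {k : ℕ} (h : l (k + 1) = l k) :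
    runStart l (k + 1) = runStart l k := by
  rw [runStart, runStart, h]

lemma runStart_succ_of_lt (hA : Antitone l) {k : ℕ} (h : l (k + 1) < l k) :
    runStart l (k + 1) = k + 1 := by
  refine le_antisymm (runStart_le hA _) (not_lt.mp fun hlt => ?_)
  have := apply_eq_of_runStart_le hA (Nat.lt_succ_iff.mp hlt) k.le_succ
  omega

lemma ncard_setOf_eq_of_succ_lt (hA : Antitone l) {k : ℕ} (h : l (k + 1) < l k) :
    {i | l i = l k}.ncard = k + 1 - runStart l k := by
  have hset : {i | l i = l k} = Set.Ico (runStart l k) (k + 1) := by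
    ext j
    simp only [Set.mem_ofPred_eq, Set.mem_Ico]
    refine ⟨fun hj => ⟨not_lt.mp fun hc => ?_, not_le.mp fun hc => ?_⟩,
      fun hj => apply_eq_of_runStart_le hA hj.1 (Nat.lt_succ_iff.mp hj.2)⟩
    · have := apply_lt_of_lt_runStart hA hc
      omega
    · have := hA (show k + 1 ≤ j from hc)
      omega
  rw [hset, ← coe_Ico, Set.ncard_coe_finset, Nat.card_Ico]

end runStart

section parity

variable {l : ℕ → ℕ}

lemma psum_mod_two (hA : Antitone l) (hrun : ∀ a, Odd a → Even {i | l i = a}.ncard) (k : ℕ) :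
    psum l k % 2 = (k - runStart l k) * l k % 2 := by
  induction k with
  | zero => simp [psum, Nat.le_zero.mp (runStart_le hA 0)]
  | succ k ih =>
    have hs := runStart_le hA k
    rw [psum_succ]
    rcases (hA k.le_succ).eq_or_lt with heq | hlt
    · rw [runStart_succ_of_eq heq, heq, show k + 1 - runStart l k = k - runStart l k + 1 by omega,
        add_one_mul]
      omega
    · rw [runStart_succ_of_lt hA hlt, Nat.sub_self, zero_mul, Nat.add_mod, ih, ← Nat.add_mod,
        ← add_one_mul, show k - runStart l k + 1 = k + 1 - runStart l k by omega]
      rcases Nat.even_or_odd (l k) with hev | hodd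
      · exact Nat.even_iff.mp (Nat.even_mul.mpr (Or.inr hev))
      · -- the run of the odd part `l k` ends at `k`, and it has even length
        rw [← ncard_setOf_eq_of_succ_lt hA hlt]
        exact Nat.even_iff.mp (Nat.even_mul.mpr (Or.inl (hrun _ hodd)))

lemma psum_div_two_add_hphiC (hA : Antitone l) (hrun : ∀ a, Odd a → Even {i | l i = a}.ncard)
    (k : ℕ) : psum l k / 2 + hphiC l k = psum l (k + 1) / 2 := by
  have hpar := psum_mod_two hA hrun k
  rw [psum_succ, hphiC]
  split_ifs with hev hoff
  · have hlk := Nat.even_iff.mp hev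
    rw [Nat.mul_mod, hlk, mul_zero] at hpar
    omega
  · rw [Nat.mul_mod, Nat.even_iff.mp hoff, zero_mul] at hpar
    omega
  · have hlk := Nat.odd_iff.mp (Nat.not_even_iff_odd.mp hev)
    rw [Nat.mul_mod, Nat.odd_iff.mp (Nat.not_even_iff_odd.mp hoff), hlk] at hpar
    omega

lemma psum_hphiC (hA : Antitone l) (hrun : ∀ a, Odd a → Even {i | l i = a}.ncard) (k : ℕ) :
    psum (hphiC l) k = psum l k / 2 := by
  induction k with
  | zero => simp [psum]
  | succ k ih => rw [psum_succ, ih, psum_div_two_add_hphiC hA hrun]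

end parity

lemma interleave_even_odd (f : ℕ → ℕ) :
    interleave (fun j => f (2 * j)) (fun j => f (2 * j + 1)) = f := by
  funext i
  unfold interleave
  split_ifs <;> exact congrArg f (by omega)

/-- `Φ̂^C : P^C_{2n} → Q_n^C` is monotone. -/
theorem hphiC_monotone (n : ℕ) (π l : ℕ → ℕ)
    (hπ : IsPC n π) (hl : IsPC n l) (hle : Dominates l π) :
    BiLE (fun j => hphiC π (2 * j)) (fun j => hphiC π (2 * j + 1))
      (fun j => hphiC l (2 * j)) (fun j => hphiC l (2 * j + 1)) := by
  intro k
  rw [interleave_even_odd, interleave_even_odd,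
    psum_hphiC (antitone_nat_of_succ_le hπ.1) hπ.2.2,
    psum_hphiC (antitone_nat_of_succ_le hl.1) hl.2.2]
  exact Nat.div_le_div_right (hle k)
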